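/- arXiv:1410.6408 — 6 statements merged into one kernel-verified Lean document; each statement's English description precedes it below -/
import Mathlib

section
/- A reflexive and transitive binary relation ≽ on F(Ω) is a regular stochastic order if and only if there exists a coherent, cash-subadditive loss measure ρ : F(Ω) → (−∞, +∞], i.e. a functional satisfying (a) ρ(cf) = c·ρ(f) for all c > 0, (b) ρ(f + g) ≤ ρ(f) + ρ(g), (c) f ≤ g pointwise implies ρ(f) ≥ ρ(g), (d) ρ(f + a) ≥ ρ(f) − a for all a ≥ 0, and (e) ρ(f) = ρ(f ∧ 0), such that ρ(−1) > 0 and, for all f, g ∈ F(Ω), f ≽ g holds if and only if ρ(f − g) ≤ 0. -/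
/-! Given a regular order, let `ρ f` be the least cash `a ≥ 0` with `f + a ≽ 0` (`+∞` if there is
none). (CONE) makes `ρ` sublinear and (CERT) antitone; (REST) makes it ignore the positive part
of `f`, since `min f 0 = 1_{f < 0} f`; (APPR) is what turns `ρ f = 0` back into `f ≽ 0`; and
(TRIV) forces `ρ (-1) ≥ 1`. Conversely, each axiom of a regular order is read off the
corresponding property of `ρ`. -/

/-- A regular stochastic order on `F(Ω)`: a reflexive and transitive binary relation
satisfying (TRIV), (CONE), (CERT), (APPR) and (REST). -/
def IsRegularOrder {Ω : Type*} (R : (Ω → ℝ) → (Ω → ℝ) → Prop) : Prop :=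
  Reflexive R ∧ Transitive R ∧
  -- (TRIV)
  ¬ R 0 1 ∧
  -- (CONE)
  (∀ f₁ g₁ f₂ g₂ : Ω → ℝ, ∀ a₁ a₂ : ℝ, R f₁ g₁ → R f₂ g₂ → 0 ≤ a₁ → 0 ≤ a₂ →
    R (a₁ • f₁ + a₂ • f₂) (a₁ • g₁ + a₂ • g₂)) ∧
  -- (CERT)
  (∀ f : Ω → ℝ, (0 : Ω → ℝ) ≤ f → R f 0) ∧
  -- (APPR)
  (∀ f : Ω → ℝ, (∀ n : ℕ, R (f + fun _ => (2 : ℝ)⁻¹ ^ n) 0) → R f 0) ∧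
  -- (REST)
  (∀ (f : Ω → ℝ) (A : Set Ω), R f 0 → R (A.indicator f) 0)

open scoped ENNReal NNReal

namespace IsRegularOrder

variable {Ω : Type*} {R : (Ω → ℝ) → (Ω → ℝ) → Prop} {f g : Ω → ℝ}

theorem smul (hR : IsRegularOrder R) {c : ℝ} (hc : 0 ≤ c) (hf : R f 0) : R (c • f) 0 := by
  obtain ⟨-, -, -, hcone, -⟩ := hR
  simpa using hcone f 0 f 0 c 0 hf hf hc le_rfl

theorem add (hR : IsRegularOrder R) (hf : R f 0) (hg : R g 0) : R (f + g) 0 := by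
  obtain ⟨-, -, -, hcone, -⟩ := hR
  simpa using hcone f 0 g 0 1 1 hf hg zero_le_one zero_le_one

theorem mono (hR : IsRegularOrder R) (hf : R f 0) (hfg : f ≤ g) : R g 0 := by
  obtain ⟨-, -, -, hcone, hcert, -⟩ := hR
  simpa using hcone (g - f) 0 f 0 1 1 (hcert _ (sub_nonneg.2 hfg)) hf zero_le_one zero_le_one

theorem iff_sub_zero (hR : IsRegularOrder R) : R f g ↔ R (f - g) 0 := by
  obtain ⟨hrefl, -, -, hcone, -⟩ := hR
  constructor
  · intro h
    simpa [sub_eq_add_neg] using hcone f g (-g) (-g) 1 1 h (hrefl _) zero_le_one zero_le_one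
  · intro h
    simpa using hcone (f - g) 0 g g 1 1 h (hrefl _) zero_le_one zero_le_one

theorem min_zero (hR : IsRegularOrder R) (hf : R f 0) : R (fun ω => min (f ω) 0) 0 := by
  have : (fun ω => min (f ω) 0) = {ω | f ω < 0}.indicator f := by
    ext ω
    by_cases h : f ω < 0
    · simp [h, h.le]
    · simp [h, not_lt.1 h]
  obtain ⟨-, -, -, -, -, -, hrest⟩ := hR
  rw [this]
  exact hrest f _ hf

theorem not_const_neg (hR : IsRegularOrder R) {a : ℝ} (ha : a < 0) : ¬ R (fun _ => a) 0 := by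
  intro h
  refine hR.2.2.1 (hR.iff_sub_zero.2 ?_)
  have : (0 - 1 : Ω → ℝ) = (-a⁻¹) • fun _ => a := by
    ext
    simp [ha.ne]
  rw [this]
  exact hR.smul (by simpa using ha.le) h

end IsRegularOrder

structure IsCoherentLossMeasure {Ω : Type*} (ρ : (Ω → ℝ) → EReal) : Prop where
  ne_bot : ∀ f, ρ f ≠ ⊥
  smul : ∀ c : ℝ, 0 < c → ∀ f, ρ (c • f) = (c : EReal) * ρ f
  add_le : ∀ f g, ρ (f + g) ≤ ρ f + ρ g
  antitone : ∀ f g, f ≤ g → ρ g ≤ ρ f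
  sub_le_add_const : ∀ f, ∀ a : ℝ, 0 ≤ a → ρ f - (a : EReal) ≤ ρ (f + fun _ => a)
  eq_min_zero : ∀ f, ρ f = ρ fun ω => min (f ω) 0

section CapitalRequirement

variable {Ω : Type*} {R : (Ω → ℝ) → (Ω → ℝ) → Prop} {f g : Ω → ℝ}

noncomputable def capitalRequirement (R : (Ω → ℝ) → (Ω → ℝ) → Prop) (f : Ω → ℝ) : ℝ≥0∞ :=
  ⨅ (a : ℝ≥0) (_ : R (f + fun _ => (a : ℝ)) 0), (a : ℝ≥0∞)

theorem capitalRequirement_le {a : ℝ≥0} (h : R (f + fun _ => (a : ℝ)) 0) :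
    capitalRequirement R f ≤ a :=
  iInf₂_le a h

theorem capitalRequirement_antitone (hR : IsRegularOrder R) (hfg : f ≤ g) :
    capitalRequirement R g ≤ capitalRequirement R f :=
  le_iInf₂ fun _ ha => capitalRequirement_le (hR.mono ha (add_le_add_left hfg _))

theorem capitalRequirement_min_zero (hR : IsRegularOrder R) :
    capitalRequirement R (fun ω => min (f ω) 0) = capitalRequirement R f := by
  refine le_antisymm (le_iInf₂ fun a ha => capitalRequirement_le (hR.mono (hR.min_zero ha) ?_))
    (capitalRequirement_antitone hR fun ω => min_le_left _ _)
  intro ω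
  rw [Pi.add_apply, ← min_add_add_right, zero_add]
  exact min_le_min_left _ a.2

theorem capitalRequirement_add_le (hR : IsRegularOrder R) :
    capitalRequirement R (f + g) ≤ capitalRequirement R f + capitalRequirement R g :=
  ENNReal.le_iInf₂_add_iInf₂ fun a ha b hb => by
    rw [← ENNReal.coe_add]
    refine capitalRequirement_le ?_
    convert hR.add ha hb using 1
    ext
    simp only [Pi.add_apply, NNReal.coe_add]
    ring

theorem capitalRequirement_le_add_const (a : ℝ≥0) :
    capitalRequirement R f ≤ capitalRequirement R (f + fun _ => (a : ℝ)) + a :=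
  tsub_le_iff_right.1 <| le_iInf₂ fun b hb => tsub_le_iff_right.2 <| by
    rw [← ENNReal.coe_add]
    refine capitalRequirement_le ?_
    convert hb using 1
    ext
    simp only [Pi.add_apply, NNReal.coe_add]
    ring

theorem capitalRequirement_smul_le (hR : IsRegularOrder R) {c : ℝ≥0} (hc : c ≠ 0) :
    capitalRequirement R ((c : ℝ) • f) ≤ c * capitalRequirement R f := by
  simp_rw [capitalRequirement, ENNReal.mul_iInf_of_ne (ENNReal.coe_ne_zero.2 hc) ENNReal.coe_ne_top]
  refine le_iInf₂ fun a ha => ?_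
  rw [← ENNReal.coe_mul]
  refine capitalRequirement_le ?_
  convert hR.smul c.coe_nonneg ha using 1
  ext
  simp only [Pi.add_apply, Pi.smul_apply, smul_eq_mul, NNReal.coe_mul]
  ring

theorem capitalRequirement_smul (hR : IsRegularOrder R) {c : ℝ≥0} (hc : c ≠ 0) :
    capitalRequirement R ((c : ℝ) • f) = c * capitalRequirement R f := by
  refine le_antisymm (capitalRequirement_smul_le hR hc) ?_
  calc (c : ℝ≥0∞) * capitalRequirement R f
      = c * capitalRequirement R (((c⁻¹ : ℝ≥0) : ℝ) • (c : ℝ) • f) := by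
        rw [smul_smul, NNReal.coe_inv, inv_mul_cancel₀ (NNReal.coe_ne_zero.2 hc), one_smul]
    _ ≤ c * (c⁻¹ * capitalRequirement R ((c : ℝ) • f)) := by
        gcongr
        exact capitalRequirement_smul_le hR (inv_ne_zero hc)
    _ = capitalRequirement R ((c : ℝ) • f) := by
        rw [← mul_assoc, ← ENNReal.coe_mul, mul_inv_cancel₀ hc, ENNReal.coe_one, one_mul]

theorem capitalRequirement_eq_zero_iff (hR : IsRegularOrder R) :
    capitalRequirement R f = 0 ↔ R f 0 := by
  refine ⟨fun h => ?_, fun h => nonpos_iff_eq_zero.1 (capitalRequirement_le (a := 0) ?_)⟩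
  · have hε : ∀ n : ℕ, R (f + fun _ => (2 : ℝ)⁻¹ ^ n) 0 := by
      intro n
      have hlt : capitalRequirement R f < ((2⁻¹ ^ n : ℝ≥0) : ℝ≥0∞) := h ▸ by positivity
      simp only [capitalRequirement, iInf_lt_iff] at hlt
      obtain ⟨a, ha, hlt⟩ := hlt
      refine hR.mono ha (add_le_add_right (fun _ => ?_) f)
      exact_mod_cast hlt.le
    obtain ⟨-, -, -, -, -, happr, -⟩ := hR
    exact happr f hε
  · rwa [NNReal.coe_zero, ← Pi.zero_def, add_zero]

theorem one_le_capitalRequirement_const_neg_one (hR : IsRegularOrder R) :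
    1 ≤ capitalRequirement R (fun _ => (-1 : ℝ)) :=
  le_iInf₂ fun a ha => by
    by_contra hlt
    have : (a : ℝ) < 1 := by exact_mod_cast not_le.1 hlt
    refine hR.not_const_neg (a := a - 1) (by linarith) ?_
    convert ha using 1
    ext
    simp only [Pi.add_apply]
    ring

theorem isCoherentLossMeasure_capitalRequirement (hR : IsRegularOrder R) :
    IsCoherentLossMeasure fun f => (capitalRequirement R f : EReal) where
  ne_bot _ := EReal.coe_ennreal_ne_bot _
  smul c hc f := by
    lift c to ℝ≥0 using hc.le
    rw [capitalRequirement_smul hR (by exact_mod_cast hc.ne'), EReal.coe_ennreal_mul,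
      EReal.coe_nnreal_eq_coe_real]
  add_le f g := by
    rw [← EReal.coe_ennreal_add, EReal.coe_ennreal_le_coe_ennreal_iff]
    exact capitalRequirement_add_le hR
  antitone f g hfg := EReal.coe_ennreal_le_coe_ennreal_iff.2 (capitalRequirement_antitone hR hfg)
  sub_le_add_const f a ha := by
    lift a to ℝ≥0 using ha
    refine EReal.sub_le_of_le_add ?_
    rw [← EReal.coe_nnreal_eq_coe_real, ← EReal.coe_ennreal_add,
      EReal.coe_ennreal_le_coe_ennreal_iff]
    exact capitalRequirement_le_add_const a
  eq_min_zero f := by rw [capitalRequirement_min_zero hR]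

theorem coe_capitalRequirement_const_neg_one_pos (hR : IsRegularOrder R) :
    (0 : EReal) < capitalRequirement R (fun _ => (-1 : ℝ)) :=
  EReal.coe_ennreal_pos.2 (one_pos.trans_le (one_le_capitalRequirement_const_neg_one hR))

theorem rel_iff_coe_capitalRequirement_sub_nonpos (hR : IsRegularOrder R) :
    R f g ↔ (capitalRequirement R (f - g) : EReal) ≤ 0 := by
  rw [hR.iff_sub_zero, ← capitalRequirement_eq_zero_iff hR, ← EReal.coe_ennreal_eq_zero,
    (EReal.coe_ennreal_nonneg _).ge_iff_eq']

end CapitalRequirement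

namespace IsCoherentLossMeasure

variable {Ω : Type*} {ρ : (Ω → ℝ) → EReal} {f : Ω → ℝ}

theorem smul_nonpos (hρ : IsCoherentLossMeasure ρ) (h0 : ρ 0 ≤ 0) {c : ℝ} (hc : 0 ≤ c)
    (hf : ρ f ≤ 0) : ρ (c • f) ≤ 0 := by
  rcases hc.eq_or_lt with rfl | hc
  · simpa using h0
  · rw [hρ.smul c hc]
    exact mul_nonpos_of_nonneg_of_nonpos (by exact_mod_cast hc.le) hf

theorem nonpos_of_forall_add_const (hρ : IsCoherentLossMeasure ρ)
    (h : ∀ n : ℕ, ρ (f + fun _ => (2 : ℝ)⁻¹ ^ n) ≤ 0) : ρ f ≤ 0 := by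
  refine EReal.le_of_forall_lt_iff_le.1 fun z hz => ?_
  obtain ⟨n, hn⟩ := exists_pow_lt_of_lt_one (by exact_mod_cast hz) (by norm_num : (2 : ℝ)⁻¹ < 1)
  have hsub := (hρ.sub_le_add_const f _ (by positivity)).trans (h n)
  rw [EReal.sub_le_iff_le_add (.inl (EReal.coe_ne_bot _)) (.inl (EReal.coe_ne_top _)),
    zero_add] at hsub
  exact hsub.trans (by exact_mod_cast hn.le)

theorem indicator_nonpos (hρ : IsCoherentLossMeasure ρ) (hf : ρ f ≤ 0) (A : Set Ω) :
    ρ (A.indicator f) ≤ 0 := by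
  rw [hρ.eq_min_zero] at hf ⊢
  refine (hρ.antitone _ _ fun ω => ?_).trans hf
  by_cases h : ω ∈ A <;> simp [h]

theorem isRegularOrder (hρ : IsCoherentLossMeasure ρ) {R : (Ω → ℝ) → (Ω → ℝ) → Prop}
    (hrefl : Reflexive R) (htrans : Transitive R) (hpos : 0 < ρ fun _ => (-1 : ℝ))
    (hR : ∀ f g, R f g ↔ ρ (f - g) ≤ 0) : IsRegularOrder R := by
  have h0 : ρ 0 ≤ 0 := by simpa using (hR 0 0).1 (hrefl 0)
  refine ⟨hrefl, htrans, ?_, ?_, ?_, ?_, ?_⟩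
  · rw [hR, zero_sub]
    exact hpos.not_ge
  · intro f₁ g₁ f₂ g₂ a₁ a₂ h₁ h₂ ha₁ ha₂
    rw [hR] at h₁ h₂ ⊢
    calc ρ (a₁ • f₁ + a₂ • f₂ - (a₁ • g₁ + a₂ • g₂))
        = ρ (a₁ • (f₁ - g₁) + a₂ • (f₂ - g₂)) := by congr 1; module
      _ ≤ ρ (a₁ • (f₁ - g₁)) + ρ (a₂ • (f₂ - g₂)) := hρ.add_le _ _
      _ ≤ 0 := add_nonpos (hρ.smul_nonpos h0 ha₁ h₁) (hρ.smul_nonpos h0 ha₂ h₂)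
  · intro f hf
    rw [hR, sub_zero]
    exact (hρ.antitone 0 f hf).trans h0
  · intro f hf
    simp only [hR, sub_zero] at hf ⊢
    exact hρ.nonpos_of_forall_add_const hf
  · intro f A hf
    rw [hR, sub_zero] at hf ⊢
    exact hρ.indicator_nonpos hf A

end IsCoherentLossMeasure

theorem stmt_1_general {Ω : Type*} (R : (Ω → ℝ) → (Ω → ℝ) → Prop)
    (hrefl : Reflexive R) (htrans : Transitive R) :
    IsRegularOrder R ↔
      ∃ ρ : (Ω → ℝ) → EReal,
        (∀ f, ρ f ≠ ⊥) ∧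
        -- (a) positive homogeneity
        (∀ c : ℝ, 0 < c → ∀ f, ρ (c • f) = (c : EReal) * ρ f) ∧
        -- (b) subadditivity
        (∀ f g, ρ (f + g) ≤ ρ f + ρ g) ∧
        -- (c) inverse monotonicity
        (∀ f g, f ≤ g → ρ g ≤ ρ f) ∧
        -- (d) cash subadditivity
        (∀ f, ∀ a : ℝ, 0 ≤ a → ρ f - (a : EReal) ≤ ρ (f + fun _ => a)) ∧
        -- (e) loss measure
        (∀ f, ρ f = ρ fun ω => min (f ω) 0) ∧
        -- ρ(-1) > 0
        (0 : EReal) < ρ (fun _ => (-1 : ℝ)) ∧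
        -- the order is induced by ρ
        (∀ f g, R f g ↔ ρ (f - g) ≤ 0) := by
  constructor
  · intro hR
    obtain ⟨hbot, hsmul, hadd, hanti, hcash, hmin⟩ := isCoherentLossMeasure_capitalRequirement hR
    exact ⟨_, hbot, hsmul, hadd, hanti, hcash, hmin,
      coe_capitalRequirement_const_neg_one_pos hR,
      fun _ _ => rel_iff_coe_capitalRequirement_sub_nonpos hR⟩
  · rintro ⟨ρ, hbot, hsmul, hadd, hanti, hcash, hmin, hpos, hR⟩
    exact IsCoherentLossMeasure.isRegularOrder ⟨hbot, hsmul, hadd, hanti, hcash, hmin⟩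
      hrefl htrans hpos hR

/-- Theorem: a reflexive transitive relation is a regular stochastic order iff it is
induced, via `f ≽ g ↔ ρ(f - g) ≤ 0`, by a coherent cash-subadditive loss measure `ρ`
with `ρ(-1) > 0`.  The loss measure takes values in `(-∞, +∞]`, modelled as `EReal`
values different from `⊥`. -/
theorem stmt_1 {Ω : Type*} [Nonempty Ω] (R : (Ω → ℝ) → (Ω → ℝ) → Prop)
    (hrefl : Reflexive R) (htrans : Transitive R) :
    IsRegularOrder R ↔
      ∃ ρ : (Ω → ℝ) → EReal,
        (∀ f, ρ f ≠ ⊥) ∧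
        -- (a) positive homogeneity
        (∀ c : ℝ, 0 < c → ∀ f, ρ (c • f) = (c : EReal) * ρ f) ∧
        -- (b) subadditivity
        (∀ f g, ρ (f + g) ≤ ρ f + ρ g) ∧
        -- (c) inverse monotonicity
        (∀ f g, f ≤ g → ρ g ≤ ρ f) ∧
        -- (d) cash subadditivity
        (∀ f, ∀ a : ℝ, 0 ≤ a → ρ f - (a : EReal) ≤ ρ (f + fun _ => a)) ∧
        -- (e) loss measure
        (∀ f, ρ f = ρ fun ω => min (f ω) 0) ∧
        -- ρ(-1) > 0
        (0 : EReal) < ρ (fun _ => (-1 : ℝ)) ∧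
        -- the order is induced by ρ
        (∀ f g, R f g ↔ ρ (f - g) ≤ 0) :=
  stmt_1_general R hrefl htrans
end

section
/- If ρ : F(Ω) → (−∞, +∞] is a coherent, cash-subadditive risk measure, i.e. it satisfies (a) ρ(cf) = c·ρ(f) for all c > 0, (b) ρ(f + g) ≤ ρ(f) + ρ(g), (c) f ≤ g pointwise implies ρ(f) ≥ ρ(g), and (d) ρ(f + a) ≥ ρ(f) − a for all a ≥ 0, then the functional ρ̂ defined by ρ̂(f) = ρ(f ∧ 0) satisfies (a), (b), (c), (d) and additionally (e) ρ̂(f) = ρ̂(f ∧ 0) for all f; that is, ρ̂ is a coherent, cash-subadditive loss measure. -/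
section MinZero

variable {α : Type*} [AddCommGroup α] [LinearOrder α] [IsOrderedAddMonoid α]

theorem min_zero_add_min_zero_le (a b : α) : min a 0 + min b 0 ≤ min (a + b) 0 :=
  le_min (add_le_add (min_le_left _ _) (min_le_left _ _))
    (add_nonpos (min_le_right _ _) (min_le_right _ _))

theorem min_add_zero_le_min_zero_add {a : α} (ha : 0 ≤ a) (x : α) :
    min (x + a) 0 ≤ min x 0 + a := by
  rw [← min_add_add_right, zero_add]
  exact min_le_min le_rfl ha

end MinZero

theorem smul_min_zero {Ω : Type*} {c : ℝ} (hc : 0 ≤ c) (f : Ω → ℝ) :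
    (fun ω => min ((c • f) ω) 0) = c • fun ω => min (f ω) 0 := by
  funext ω
  simp only [Pi.smul_apply, smul_eq_mul, mul_min_of_nonneg _ _ hc, mul_zero]

theorem stmt_2_general {Ω : Type*} (ρ : (Ω → ℝ) → EReal)
    (hbot : ∀ f, ρ f ≠ ⊥)
    -- (a) positive homogeneity
    (ha : ∀ c : ℝ, 0 < c → ∀ f, ρ (c • f) = (c : EReal) * ρ f)
    -- (b) subadditivity
    (hb : ∀ f g, ρ (f + g) ≤ ρ f + ρ g)
    -- (c) inverse monotonicity
    (hc : ∀ f g, f ≤ g → ρ g ≤ ρ f)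
    -- (d) cash subadditivity
    (hd : ∀ f, ∀ a : ℝ, 0 ≤ a → ρ f - (a : EReal) ≤ ρ (f + fun _ => a))
    (ρh : (Ω → ℝ) → EReal)
    (hρh : ∀ f, ρh f = ρ fun ω => min (f ω) 0) :
    (∀ f, ρh f ≠ ⊥) ∧
    (∀ c : ℝ, 0 < c → ∀ f, ρh (c • f) = (c : EReal) * ρh f) ∧
    (∀ f g, ρh (f + g) ≤ ρh f + ρh g) ∧
    (∀ f g, f ≤ g → ρh g ≤ ρh f) ∧
    (∀ f, ∀ a : ℝ, 0 ≤ a → ρh f - (a : EReal) ≤ ρh (f + fun _ => a)) ∧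
    (∀ f, ρh f = ρh fun ω => min (f ω) 0) := by
  simp only [hρh]
  refine ⟨fun f => hbot _, fun c hc0 f => ?_, fun f g => ?_, fun f g hfg => ?_,
    fun f a ha0 => ?_, fun f => ?_⟩
  · rw [smul_min_zero hc0.le, ha c hc0]
  · calc ρ (fun ω => min ((f + g) ω) 0)
        ≤ ρ ((fun ω => min (f ω) 0) + fun ω => min (g ω) 0) :=
          hc _ _ fun ω => min_zero_add_min_zero_le (f ω) (g ω)
      _ ≤ _ := hb _ _
  · exact hc _ _ fun ω => min_le_min (hfg ω) le_rfl
  · exact (hd _ a ha0).trans (hc _ _ fun ω => min_add_zero_le_min_zero_add ha0 (f ω))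
  · simp only [min_assoc, min_self]

/-- If `ρ` is a coherent cash-subadditive risk measure with values in `(-∞,+∞]`
(modelled as `EReal` values different from `⊥`), then `ρ̂(f) = ρ(f ∧ 0)` is a
coherent cash-subadditive loss measure: it satisfies (a)–(d) and also
(e) `ρ̂(f) = ρ̂(f ∧ 0)`. -/
theorem stmt_2 {Ω : Type*} [Nonempty Ω] (ρ : (Ω → ℝ) → EReal)
    (hbot : ∀ f, ρ f ≠ ⊥)
    -- (a) positive homogeneity
    (ha : ∀ c : ℝ, 0 < c → ∀ f, ρ (c • f) = (c : EReal) * ρ f)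
    -- (b) subadditivity
    (hb : ∀ f g, ρ (f + g) ≤ ρ f + ρ g)
    -- (c) inverse monotonicity
    (hc : ∀ f g, f ≤ g → ρ g ≤ ρ f)
    -- (d) cash subadditivity
    (hd : ∀ f, ∀ a : ℝ, 0 ≤ a → ρ f - (a : EReal) ≤ ρ (f + fun _ => a))
    (ρh : (Ω → ℝ) → EReal)
    (hρh : ∀ f, ρh f = ρ fun ω => min (f ω) 0) :
    (∀ f, ρh f ≠ ⊥) ∧
    (∀ c : ℝ, 0 < c → ∀ f, ρh (c • f) = (c : EReal) * ρh f) ∧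
    (∀ f g, ρh (f + g) ≤ ρh f + ρh g) ∧
    (∀ f g, f ≤ g → ρh g ≤ ρh f) ∧
    (∀ f, ∀ a : ℝ, 0 ≤ a → ρh f - (a : EReal) ≤ ρh (f + fun _ => a)) ∧
    (∀ f, ρh f = ρh fun ω => min (f ω) 0) :=
  stmt_2_general ρ hbot ha hb hc hd ρh hρh
end

section
/- Let 𝒩 be an ideal of subsets of Ω (∅ ∈ 𝒩; B ⊆ A ∈ 𝒩 implies B ∈ 𝒩; A, B ∈ 𝒩 implies A ∪ B ∈ 𝒩) with Ω ∉ 𝒩. Define f ≽ g if and only if {ω ∈ Ω : f(ω) − g(ω) ≤ −η} ∈ 𝒩 for every η > 0. Then ≽ is a regular stochastic order on F(Ω). -/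
open Filter Topology

def ApproxGE {Ω : Type*} (F : Filter Ω) (f g : Ω → ℝ) : Prop :=
  ∀ η : ℝ, 0 < η → ∀ᶠ ω in F, g ω < f ω + η

namespace ApproxGE

variable {Ω : Type*} {F : Filter Ω}

theorem of_le {f g : Ω → ℝ} (h : g ≤ f) : ApproxGE F f g :=
  fun _ hη => Eventually.of_forall fun ω => by linarith [h ω]

theorem refl (f : Ω → ℝ) : ApproxGE F f f :=
  of_le le_rfl

theorem trans {f g h : Ω → ℝ} (hfg : ApproxGE F f g) (hgh : ApproxGE F g h) :
    ApproxGE F f h := by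
  intro η hη
  filter_upwards [hfg (η / 2) (half_pos hη), hgh (η / 2) (half_pos hη)] with ω h₁ h₂
  linarith

theorem not_zero_one [F.NeBot] : ¬ ApproxGE F 0 1 := fun h => by
  obtain ⟨ω, hω⟩ := (h 1 one_pos).exists
  simp at hω

theorem add {f₁ g₁ f₂ g₂ : Ω → ℝ} (h₁ : ApproxGE F f₁ g₁) (h₂ : ApproxGE F f₂ g₂) :
    ApproxGE F (f₁ + f₂) (g₁ + g₂) := by
  intro η hη
  filter_upwards [h₁ (η / 2) (half_pos hη), h₂ (η / 2) (half_pos hη)] with ω h₁ h₂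
  simp only [Pi.add_apply]
  linarith

theorem smul {f g : Ω → ℝ} (h : ApproxGE F f g) {a : ℝ} (ha : 0 ≤ a) :
    ApproxGE F (a • f) (a • g) := by
  rcases ha.eq_or_lt with rfl | ha
  · simpa using refl (F := F) 0
  intro η hη
  filter_upwards [h (η / a) (by positivity)] with ω hω
  have := mul_lt_mul_of_pos_left hω ha
  rw [mul_add, mul_div_cancel₀ _ ha.ne'] at this
  simpa using this

theorem of_add_const {f g : Ω → ℝ} {ε : ℕ → ℝ} (hε : Tendsto ε atTop (𝓝 0))
    (h : ∀ n, ApproxGE F (f + fun _ => ε n) g) : ApproxGE F f g := by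
  intro η hη
  obtain ⟨n, hn⟩ := (hε.eventually (gt_mem_nhds (half_pos hη))).exists
  filter_upwards [h n (η / 2) (half_pos hη)] with ω hω
  simp only [Pi.add_apply] at hω
  linarith

theorem indicator {f : Ω → ℝ} (h : ApproxGE F f 0) (A : Set Ω) :
    ApproxGE F (A.indicator f) 0 := by
  intro η hη
  filter_upwards [h η hη] with ω hω
  by_cases hA : ω ∈ A
  · simpa [hA] using hω
  · simpa [hA] using hη

theorem isRegularOrder [F.NeBot] : IsRegularOrder (ApproxGE F) :=
  ⟨refl, fun _ _ _ => trans, not_zero_one,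
    fun _ _ _ _ _ _ h₁ h₂ ha₁ ha₂ => (h₁.smul ha₁).add (h₂.smul ha₂),
    fun _ hf => of_le hf,
    fun _ => of_add_const (tendsto_pow_atTop_nhds_zero_of_lt_one (by norm_num) (by norm_num)),
    fun _ A h => h.indicator A⟩

end ApproxGE

theorem setOf_lt_add_mem_comk_iff {Ω : Type*} {N : Set (Set Ω)} {he hmono hunion}
    {f g : Ω → ℝ} {η : ℝ} :
    {ω | g ω < f ω + η} ∈ comk (· ∈ N) he hmono hunion ↔ {ω | f ω - g ω ≤ -η} ∈ N := by
  have hcompl : {ω | g ω < f ω + η} = {ω | f ω - g ω ≤ -η}ᶜ := by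
    ext ω
    simp only [Set.mem_compl_iff, Set.mem_ofPred_eq, not_le]
    constructor <;> intro <;> linarith
  rw [hcompl, compl_mem_comk]

theorem stmt_4_general {Ω : Type*} (N : Set (Set Ω))
    (hempty : ∅ ∈ N)
    (hdown : ∀ A ∈ N, ∀ B, B ⊆ A → B ∈ N)
    (hunion : ∀ A ∈ N, ∀ B ∈ N, A ∪ B ∈ N)
    (huniv : Set.univ ∉ N)
    (R : (Ω → ℝ) → (Ω → ℝ) → Prop)
    (hR : ∀ f g, R f g ↔ ∀ η : ℝ, 0 < η → {ω | f ω - g ω ≤ -η} ∈ N) :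
    IsRegularOrder R := by
  let F : Filter Ω := comk (· ∈ N) hempty hdown hunion
  have : F.NeBot := ⟨fun hF => huniv <| by
    simpa [F] using (hF ▸ mem_bot : (∅ : Set Ω) ∈ F)⟩
  have hRF : R = ApproxGE F := by
    ext f g
    simp only [hR, ApproxGE, Filter.Eventually, F, setOf_lt_add_mem_comk_iff]
  exact hRF ▸ ApproxGE.isRegularOrder

/-- The order induced by an ideal `𝒩` of subsets of `Ω` with `Ω ∉ 𝒩`, namely
`f ≽ g ↔ {f - g ≤ -η} ∈ 𝒩 for all η > 0`, is a regular stochastic order. -/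
theorem stmt_4 {Ω : Type*} [Nonempty Ω] (N : Set (Set Ω))
    (hempty : ∅ ∈ N)
    (hdown : ∀ A ∈ N, ∀ B, B ⊆ A → B ∈ N)
    (hunion : ∀ A ∈ N, ∀ B ∈ N, A ∪ B ∈ N)
    (huniv : Set.univ ∉ N)
    (R : (Ω → ℝ) → (Ω → ℝ) → Prop)
    (hR : ∀ f g, R f g ↔ ∀ η : ℝ, 0 < η → {ω | f ω - g ω ≤ -η} ∈ N) :
    IsRegularOrder R :=
  stmt_4_general N hempty hdown hunion huniv R hR
end

section
/- Let 0 = j₀ < j₁ < … < j_I < j_{I+1} be real numbers and q₀, q₁, …, q_I ≥ 0 prices such that the piecewise linear function through the points (j₀, q₀), (j₁, q₁), …, (j_I, q_I), (j_{I+1}, 0) is nonincreasing and convex. Let g : [0, ∞) → ℝ be convex with g ≥ 0 = g(0), let 𝐠 = (g(j₁), …, g(j_{I+1}))ᵀ ∈ ℝ^{I+1}, and let D be the (I+1)×(I+1) lower triangular matrix with entries D[n, i] = (j_n − j_{i−1})⁺ for n = 1, …, I+1 and i = 1, …, I+1. Then D is invertible, the vector 𝐰 = D⁻¹𝐠 has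 all coordinates nonnegative, and 𝐰 solves the linear program: 𝐪ᵀ𝐰 = min{𝐪ᵀ𝐚 : 𝐚 ∈ ℝ^{I+1}, 𝐚 ≥ 0, D𝐚 ≥ 𝐠}, where 𝐪 = (q₀, …, q_I)ᵀ and the inequalities between vectors are coordinatewise. -/
/-!
Row `n` of `D` applied to `a` is `∑_{i ≤ n} (j_{n+1} - j_i) a_i`, so by Abel summation `D w = 𝐠`
says exactly that the partial sums of `w` are the chord slopes of `g` on the grid; convexity of
`g` makes these slopes nondecreasing, hence `w ≥ 0`. Symmetrically, the increments `y` of the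
chord slopes of the price curve (extended by slope `0` beyond `j_{I+1}`) satisfy `yᵀ D = 𝐪ᵀ`, and
`y ≥ 0` because the price curve is convex and nonincreasing. Weak duality then gives
`𝐪ᵀ a = yᵀ D a ≥ yᵀ 𝐠 = 𝐪ᵀ w` for every feasible `a`.
-/

open Finset Matrix

section WeakDuality

variable {m n R : Type*} [Fintype m] [Fintype n] [CommRing R] [PartialOrder R] [IsOrderedRing R]

theorem dotProduct_le_dotProduct_of_vecMul_eq {A : Matrix m n R} {b : m → R} {c x a : n → R}
    {y : m → R} (hx : A *ᵥ x = b) (hy : y ᵥ* A = c) (hy0 : 0 ≤ y) (ha : b ≤ A *ᵥ a) :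
    c ⬝ᵥ x ≤ c ⬝ᵥ a := by
  rw [← hy, ← dotProduct_mulVec, ← dotProduct_mulVec, hx]
  exact dotProduct_le_dotProduct_of_nonneg_left ha hy0

end WeakDuality

section Summation

variable {R : Type*} [CommRing R]

def backwardDiff (s : ℕ → R) : ℕ → R
  | 0 => s 0
  | i + 1 => s (i + 1) - s i

theorem sum_range_succ_backwardDiff (s : ℕ → R) (m : ℕ) :
    ∑ i ∈ range (m + 1), backwardDiff s i = s m := by
  induction m with
  | zero => simp [backwardDiff]
  | succ m ih => rw [sum_range_succ, ih, backwardDiff, add_sub_cancel]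

theorem sum_range_sub_mul_backwardDiff (x s : ℕ → R) (m : ℕ) :
    ∑ i ∈ range m, (x m - x i) * backwardDiff s i = ∑ i ∈ range m, (x (i + 1) - x i) * s i := by
  induction m with
  | zero => simp
  | succ m ih =>
    calc ∑ i ∈ range (m + 1), (x (m + 1) - x i) * backwardDiff s i
        = ∑ i ∈ range (m + 1), ((x m - x i) * backwardDiff s i
            + (x (m + 1) - x m) * backwardDiff s i) :=
          sum_congr rfl fun _ _ => by ring
      _ = ∑ i ∈ range m, (x m - x i) * backwardDiff s i + (x (m + 1) - x m) * s m := by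
          rw [sum_add_distrib, ← mul_sum, sum_range_succ_backwardDiff, sum_range_succ,
            sub_self, zero_mul, add_zero]
      _ = ∑ i ∈ range (m + 1), (x (i + 1) - x i) * s i := by
          rw [ih, sum_range_succ]

theorem sum_Ico_sub_mul_sub (x t : ℕ → R) {i m : ℕ} (him : i ≤ m) :
    ∑ n ∈ Ico i m, (x (n + 1) - x i) * (t (n + 1) - t n)
      = ∑ n ∈ Ico i m, (x (n + 1) - x n) * (t m - t n) := by
  induction m, him using Nat.le_induction with
  | base => simp
  | succ m him ih =>
    calc ∑ n ∈ Ico i (m + 1), (x (n + 1) - x i) * (t (n + 1) - t n)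
        = ∑ n ∈ Ico i m, (x (n + 1) - x n) * (t m - t n)
            + (x (m + 1) - x i) * (t (m + 1) - t m) := by
          rw [sum_Ico_succ_top him, ih]
      _ = ∑ n ∈ Ico i m, ((x (n + 1) - x n) * (t m - t n)
            + (x (n + 1) - x n) * (t (m + 1) - t m))
            + (x (m + 1) - x m) * (t (m + 1) - t m) := by
          rw [sum_add_distrib, ← sum_mul, sum_Ico_sub x him]
          ring
      _ = ∑ n ∈ Ico i (m + 1), (x (n + 1) - x n) * (t (m + 1) - t n) := by
          rw [sum_Ico_succ_top him]
          congr 1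
          exact sum_congr rfl fun _ _ => by ring

end Summation

section RampMatrix

variable {𝕜 : Type*} [Field 𝕜] [LinearOrder 𝕜] [IsStrictOrderedRing 𝕜] {I : ℕ} {x : ℕ → 𝕜}

def rampMatrix (I : ℕ) (x : ℕ → 𝕜) : Matrix (Fin (I + 1)) (Fin (I + 1)) 𝕜 :=
  Matrix.of fun n i => max (x (n + 1) - x i) 0

theorem rampMatrix_isLowerTriangular (hx : MonotoneOn x (Set.Iic (I + 1))) :
    (rampMatrix I x).IsLowerTriangular := by
  intro n i (hni : n < i)
  have : x (n + 1) ≤ x i := hx (Set.mem_Iic.2 (by omega)) (Set.mem_Iic.2 (by omega)) (by omega)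
  exact max_eq_right (sub_nonpos.2 this)

theorem isUnit_rampMatrix (hx : StrictMonoOn x (Set.Iic (I + 1))) : IsUnit (rampMatrix I x) := by
  rw [isUnit_iff_isUnit_det, det_of_isLowerTriangular _ (rampMatrix_isLowerTriangular hx.monotoneOn)]
  refine (prod_pos fun n _ => ?_).ne'.isUnit
  have : x n < x (n + 1) := hx (Set.mem_Iic.2 (by omega)) (Set.mem_Iic.2 (by omega)) (by omega)
  simpa [rampMatrix] using this

theorem rampMatrix_mulVec (hx : MonotoneOn x (Set.Iic (I + 1))) (v : ℕ → 𝕜) (n : Fin (I + 1)) :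
    (rampMatrix I x *ᵥ fun i => v i) n = ∑ i ∈ range (n + 1), (x (n + 1) - x i) * v i := by
  calc (rampMatrix I x *ᵥ fun i => v i) n
      = ∑ i ∈ range (I + 1), max (x (n + 1) - x i) 0 * v i :=
        Fin.sum_univ_eq_sum_range (fun i => max (x (n + 1) - x i) 0 * v i) _
    _ = ∑ i ∈ range (n + 1), max (x (n + 1) - x i) 0 * v i := by
        refine (sum_subset (range_subset_range.2 (by omega)) fun i hi hin => ?_).symm
        simp only [mem_range] at hi hin
        have : x (n + 1) ≤ x i := hx (Set.mem_Iic.2 (by omega)) (Set.mem_Iic.2 (by omega)) (by omega)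
        rw [max_eq_right (sub_nonpos.2 this), zero_mul]
    _ = ∑ i ∈ range (n + 1), (x (n + 1) - x i) * v i := by
        refine sum_congr rfl fun i hi => ?_
        simp only [mem_range] at hi
        have : x i ≤ x (n + 1) := hx (Set.mem_Iic.2 (by omega)) (Set.mem_Iic.2 (by omega)) (by omega)
        rw [max_eq_left (sub_nonneg.2 this)]

theorem rampMatrix_vecMul (hx : MonotoneOn x (Set.Iic (I + 1))) (y : ℕ → 𝕜) (i : Fin (I + 1)) :
    ((fun n : Fin (I + 1) => y n) ᵥ* rampMatrix I x) i = ∑ n ∈ Ico (i : ℕ) (I + 1), (x (n + 1) - x i) * y n := by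
  calc ((fun n : Fin (I + 1) => y n) ᵥ* rampMatrix I x) i
      = ∑ n ∈ Ico 0 (I + 1), y n * max (x (n + 1) - x i) 0 := by
        rw [← range_eq_Ico]
        exact Fin.sum_univ_eq_sum_range (fun n => y n * max (x (n + 1) - x i) 0) _
    _ = ∑ n ∈ Ico (i : ℕ) (I + 1), y n * max (x (n + 1) - x i) 0 := by
        refine (sum_subset (Ico_subset_Ico (Nat.zero_le _) le_rfl) fun n hn hin => ?_).symm
        simp only [mem_Ico] at hn hin
        have : x (n + 1) ≤ x i := hx (Set.mem_Iic.2 (by omega)) (Set.mem_Iic.2 (by omega)) (by omega)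
        rw [max_eq_right (sub_nonpos.2 this), mul_zero]
    _ = ∑ n ∈ Ico (i : ℕ) (I + 1), (x (n + 1) - x i) * y n := by
        refine sum_congr rfl fun n hn => ?_
        simp only [mem_Ico] at hn
        have : x i ≤ x (n + 1) := hx (Set.mem_Iic.2 (by omega)) (Set.mem_Iic.2 (by omega)) (by omega)
        rw [max_eq_left (sub_nonneg.2 this), mul_comm]

end RampMatrix

section ChordSlopes

variable {𝕜 : Type*} [Field 𝕜] [LinearOrder 𝕜] {I : ℕ} {x : ℕ → 𝕜}

def chordSlope (x f : ℕ → 𝕜) (n : ℕ) : 𝕜 :=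
  (f (n + 1) - f n) / (x (n + 1) - x n)

def chordSlopeUpTo (I : ℕ) (x f : ℕ → 𝕜) (n : ℕ) : 𝕜 :=
  if n ≤ I then chordSlope x f n else 0

theorem chordSlopeUpTo_le_succ {f : ℕ → 𝕜}
    (hmono : ∀ n, n + 1 ≤ I → chordSlope x f n ≤ chordSlope x f (n + 1))
    (hlast : chordSlope x f I ≤ 0) {n : ℕ} (hn : n ≤ I) :
    chordSlopeUpTo I x f n ≤ chordSlopeUpTo I x f (n + 1) := by
  rw [chordSlopeUpTo, chordSlopeUpTo, if_pos hn]
  split_ifs with h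
  · exact hmono n h
  · rwa [show n = I by omega]

variable [IsStrictOrderedRing 𝕜]

theorem sub_mul_chordSlope {n : ℕ} (hn : x n < x (n + 1)) (f : ℕ → 𝕜) :
    (x (n + 1) - x n) * chordSlope x f n = f (n + 1) - f n :=
  mul_div_cancel₀ _ (sub_pos.2 hn).ne'

theorem rampMatrix_mulVec_backwardDiff_chordSlope (hx : StrictMonoOn x (Set.Iic (I + 1)))
    (f : ℕ → 𝕜) (n : Fin (I + 1)) :
    (rampMatrix I x *ᵥ fun i => backwardDiff (chordSlope x f) i) n = f (n + 1) - f 0 := by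
  rw [rampMatrix_mulVec hx.monotoneOn, sum_range_sub_mul_backwardDiff, ← sum_range_sub]
  refine sum_congr rfl fun i hi => sub_mul_chordSlope (hx ?_ ?_ (by omega)) f
  all_goals simp only [mem_range] at hi; exact Set.mem_Iic.2 (by omega)

theorem vecMul_rampMatrix_chordSlopeUpTo (hx : StrictMonoOn x (Set.Iic (I + 1)))
    (f : ℕ → 𝕜) (i : Fin (I + 1)) :
    ((fun n : Fin (I + 1) => chordSlopeUpTo I x f (n + 1) - chordSlopeUpTo I x f n)
      ᵥ* rampMatrix I x) i = f i - f (I + 1) := by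
  rw [rampMatrix_vecMul hx.monotoneOn (fun n => chordSlopeUpTo I x f (n + 1) - chordSlopeUpTo I x f n),
    sum_Ico_sub_mul_sub _ _ (by omega), ← neg_sub, ← sum_Ico_sub f (by omega), ← sum_neg_distrib]
  refine sum_congr rfl fun n hn => ?_
  simp only [mem_Ico] at hn
  rw [chordSlopeUpTo, if_neg (by omega), chordSlopeUpTo, if_pos (by omega), zero_sub, mul_neg,
    sub_mul_chordSlope (hx (Set.mem_Iic.2 (by omega)) (Set.mem_Iic.2 (by omega)) (by omega))]

theorem backwardDiff_chordSlope_nonneg {s : Set 𝕜} {f : 𝕜 → 𝕜} (hf : ConvexOn 𝕜 s f)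
    (hxs : ∀ k ≤ I + 1, x k ∈ s) (hx : StrictMonoOn x (Set.Iic (I + 1)))
    (h01 : f (x 0) ≤ f (x 1)) {i : ℕ} (hi : i ≤ I) :
    0 ≤ backwardDiff (chordSlope x (f ∘ x)) i := by
  have hlt : ∀ k ≤ I, x k < x (k + 1) := fun k hk =>
    hx (Set.mem_Iic.2 (by omega)) (Set.mem_Iic.2 (by omega)) (by omega)
  cases i with
  | zero => exact div_nonneg (sub_nonneg.2 h01) (sub_nonneg.2 (hlt 0 (by omega)).le)
  | succ i =>
    exact sub_nonneg.2 (hf.slope_mono_adjacent (hxs i (by omega)) (hxs (i + 2) (by omega))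
      (hlt i (by omega)) (hlt (i + 1) hi))

end ChordSlopes

theorem stmt_13_general (I : ℕ) (j : ℕ → ℝ) (q : ℕ → ℝ)
    (hj0 : j 0 = 0)
    (hjmono : ∀ n, n ≤ I → j n < j (n + 1))
    (hqtop : q (I + 1) = 0)
    -- the chord slopes of the piecewise linear price curve are nonpositive …
    (hslope_np : ∀ n, n ≤ I → (q (n + 1) - q n) / (j (n + 1) - j n) ≤ 0)
    -- … and nondecreasing (the curve is convex)
    (hslope_mono : ∀ n, n + 1 ≤ I →
      (q (n + 1) - q n) / (j (n + 1) - j n) ≤ (q (n + 2) - q (n + 1)) / (j (n + 2) - j (n + 1)))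
    (g : ℝ → ℝ) (hgconv : ConvexOn ℝ (Set.Ici 0) g)
    (hgnn : ∀ x, 0 ≤ x → 0 ≤ g x) (hg0 : g 0 = 0)
    (D : Matrix (Fin (I + 1)) (Fin (I + 1)) ℝ)
    (hD : ∀ n i : Fin (I + 1), D n i = max (j (n.val + 1) - j i.val) 0)
    (gvec : Fin (I + 1) → ℝ) (hgvec : ∀ n : Fin (I + 1), gvec n = g (j (n.val + 1)))
    (qvec : Fin (I + 1) → ℝ) (hqvec : ∀ i : Fin (I + 1), qvec i = q i.val)
    (w : Fin (I + 1) → ℝ) (hw : w = D⁻¹.mulVec gvec) :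
    -- D is invertible
    IsUnit D ∧
    -- w = D⁻¹ 𝐠 is nonnegative
    (∀ i, 0 ≤ w i) ∧
    -- w is feasible for the linear program
    gvec ≤ D.mulVec w ∧
    -- and w is optimal: it minimizes 𝐪ᵀ𝐚 over the feasible set
    (∀ a : Fin (I + 1) → ℝ, (∀ i, 0 ≤ a i) → gvec ≤ D.mulVec a →
      qvec ⬝ᵥ w ≤ qvec ⬝ᵥ a) := by
  have hj : StrictMonoOn j (Set.Iic (I + 1)) :=
    strictMonoOn_Iic_of_lt_succ fun n hn => by simpa using hjmono n (by omega)
  have hj_nonneg : ∀ k ≤ I + 1, j k ∈ Set.Ici 0 := fun k hk =>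
    hj0 ▸ hj.monotoneOn (Set.mem_Iic.2 (Nat.zero_le _)) (Set.mem_Iic.2 hk) (Nat.zero_le k)
  obtain rfl : D = rampMatrix I j := Matrix.ext hD
  have hD_unit := isUnit_rampMatrix hj
  have hprimal : rampMatrix I j *ᵥ (fun i => backwardDiff (chordSlope j (g ∘ j)) i) = gvec := by
    funext n
    rw [rampMatrix_mulVec_backwardDiff_chordSlope hj, hgvec]
    simp [hj0, hg0]
  have hw' : w = fun i : Fin (I + 1) => backwardDiff (chordSlope j (g ∘ j)) i := by
    have := hD_unit.invertible
    exact hw ▸ inv_mulVec_eq_vec hprimal.symm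
  have hdual : (fun n : Fin (I + 1) => chordSlopeUpTo I j q (n + 1) - chordSlopeUpTo I j q n)
      ᵥ* rampMatrix I j = qvec := by
    funext i
    rw [vecMul_rampMatrix_chordSlopeUpTo hj, hqtop, sub_zero, hqvec]
  subst hw'
  refine ⟨hD_unit, fun i => ?_, hprimal.ge, fun a _ ha => ?_⟩
  · exact backwardDiff_chordSlope_nonneg hgconv hj_nonneg hj
      (by simpa [hj0, hg0] using hgnn (j 1) (hj_nonneg 1 (by omega))) (by omega)
  · refine dotProduct_le_dotProduct_of_vecMul_eq hprimal hdual (fun n => ?_) ha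
    exact sub_nonneg.2 (chordSlopeUpTo_le_succ hslope_mono (hslope_np I le_rfl) (by omega))

/-- Solution of the super-replication linear program for a convex payoff `g` using a
finite family of call prices lying on a nonincreasing convex piecewise linear curve.
Indices: `j 0 = 0 < j 1 < … < j (I+1)`, prices `q 0, …, q I ≥ 0`, `q (I+1) = 0`;
`D n i = (j (n+1) - j i)⁺` for `n, i : Fin (I+1)`; `𝐠 n = g (j (n+1))`;
`𝐪 i = q i`. -/
theorem stmt_13 (I : ℕ) (j : ℕ → ℝ) (q : ℕ → ℝ)
    (hj0 : j 0 = 0)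
    (hjmono : ∀ n, n ≤ I → j n < j (n + 1))
    (hq : ∀ n, n ≤ I → 0 ≤ q n) (hqtop : q (I + 1) = 0)
    -- the chord slopes of the piecewise linear price curve are nonpositive …
    (hslope_np : ∀ n, n ≤ I → (q (n + 1) - q n) / (j (n + 1) - j n) ≤ 0)
    -- … and nondecreasing (the curve is convex)
    (hslope_mono : ∀ n, n + 1 ≤ I →
      (q (n + 1) - q n) / (j (n + 1) - j n) ≤ (q (n + 2) - q (n + 1)) / (j (n + 2) - j (n + 1)))
    (g : ℝ → ℝ) (hgconv : ConvexOn ℝ (Set.Ici 0) g)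
    (hgnn : ∀ x, 0 ≤ x → 0 ≤ g x) (hg0 : g 0 = 0)
    (D : Matrix (Fin (I + 1)) (Fin (I + 1)) ℝ)
    (hD : ∀ n i : Fin (I + 1), D n i = max (j (n.val + 1) - j i.val) 0)
    (gvec : Fin (I + 1) → ℝ) (hgvec : ∀ n : Fin (I + 1), gvec n = g (j (n.val + 1)))
    (qvec : Fin (I + 1) → ℝ) (hqvec : ∀ i : Fin (I + 1), qvec i = q i.val)
    (w : Fin (I + 1) → ℝ) (hw : w = D⁻¹.mulVec gvec) :
    -- D is invertible
    IsUnit D ∧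
    -- w = D⁻¹ 𝐠 is nonnegative
    (∀ i, 0 ≤ w i) ∧
    -- w is feasible for the linear program
    gvec ≤ D.mulVec w ∧
    -- and w is optimal: it minimizes 𝐪ᵀ𝐚 over the feasible set
    (∀ a : Fin (I + 1) → ℝ, (∀ i, 0 ≤ a i) → gvec ≤ D.mulVec a →
      qvec ⬝ᵥ w ≤ qvec ⬝ᵥ a) :=
  stmt_13_general I j q hj0 hjmono hqtop hslope_np hslope_mono g hgconv hgnn hg0 D hD gvec hgvec
    qvec hqvec w hw
end

section
/- Let G = {g_t : t ∈ [0, ∞)} ⊆ Γ satisfy g_t ≤ a·g_{t₁} + (1−a)·g_{t₂} pointwise whenever 0 ≤ a ≤ 1 and t ≥ a·t₁ + (1−a)·t₂. Then the function F : [0, ∞) → ℝ defined by F(t) = π_X(g_t(X)/(X ∧ 1)) is real-valued, nonnegative, nonincreasing and convex. -/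
open scoped ENNReal

/-- `f_* = sup {a : ℝ | f ≽ a}`, valued in `EReal` (so `⊥` if no such `a` exists). -/
noncomputable def starLow {Ω : Type*} (R : (Ω → ℝ) → (Ω → ℝ) → Prop) (f : Ω → ℝ) : EReal :=
  sSup {y : EReal | ∃ a : ℝ, y = (a : EReal) ∧ R f fun _ => a}

/-- `f^* = -(-f)_*`. -/
noncomputable def starHigh {Ω : Type*} (R : (Ω → ℝ) → (Ω → ℝ) → Prop) (f : Ω → ℝ) : EReal :=
  - starLow R (-f)

/-- Membership in `Γ`: convex nonnegative functions on `[0,∞)` vanishing at `0` with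
finite asymptotic slope `lim g(n)/n < ∞`. -/
def MemGamma (g : ℝ → ℝ) : Prop :=
  ConvexOn ℝ (Set.Ici 0) g ∧ (∀ x : ℝ, 0 ≤ x → 0 ≤ g x) ∧ g 0 = 0 ∧
    ∃ L : ℝ, Filter.Tendsto (fun n : ℕ => g n / n) Filter.atTop (nhds L)

/-- The set of admissible option strategies `Θ_X`: finitely supported nonnegative
functions on the set `K` of strike prices. -/
def ThetaX (K : Set ℝ) : Set (ℝ →₀ ℝ) :=
  {θ | ↑θ.support ⊆ K ∧ ∀ k, 0 ≤ θ k}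

/-- Cost of an option strategy. -/
noncomputable def optCost (qX : ℝ → ℝ) (θ : ℝ →₀ ℝ) : ℝ :=
  θ.sum fun k x => x * qX k

/-- Payoff of an option strategy. -/
noncomputable def optPayoff {Ω : Type*} (X : Ω → ℝ) (θ : ℝ →₀ ℝ) : Ω → ℝ :=
  fun ω => θ.sum fun k x => x * max (X ω - k) 0

/-- The option super-hedging functional (with numéraire `X ∧ 1`):
`π_X(h) = inf {λ q(θ) : λ > 0, θ ∈ Θ_X, λ X(θ)/(X ∧ 1) ≽ h}`. -/
noncomputable def piX {Ω : Type*} (R : (Ω → ℝ) → (Ω → ℝ) → Prop)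
    (X : Ω → ℝ) (K : Set ℝ) (qX : ℝ → ℝ) (h : Ω → ℝ) : EReal :=
  sInf {y : EReal | ∃ (l : ℝ) (θ : ℝ →₀ ℝ), 0 < l ∧ θ ∈ ThetaX K ∧
    R (fun ω => l * optPayoff X θ ω / min (X ω) 1) h ∧
    y = ((l * optCost qX θ : ℝ) : EReal)}

/-! Each call-price `F t` is the infimum of the real costs of the option strategies that
superhedge `g_t(X)/(X ∧ 1)`. The call with strike `0` superhedges any `Γ`-payoff because `Γ` has
finite asymptotic slope, so the infimum is finite, and it is nonnegative since prices are.
Strategies for `g_{t₁}` and `g_{t₂}` combine by (CONE) into one for `a g_{t₁} + (1 - a) g_{t₂}`,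
which dominates `g_t` by the convexity of the family; so `F` is convex, and taking `a = 1` shows
that it is nonincreasing. -/

namespace IsRegularOrder

variable {Ω : Type*} {R : (Ω → ℝ) → (Ω → ℝ) → Prop}

theorem of_le (hR : IsRegularOrder R) {f h : Ω → ℝ} (hle : h ≤ f) : R f h := by
  obtain ⟨hrefl, -, -, hcone, hcert, -, -⟩ := hR
  have hsub : R (f - h) 0 := hcert _ fun ω => by simpa using hle ω
  simpa using hcone (f - h) 0 h h 1 1 hsub (hrefl h) zero_le_one zero_le_one

theorem trans_le (hR : IsRegularOrder R) {f h h' : Ω → ℝ} (hf : R f h) (hle : h' ≤ h) :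
    R f h' :=
  hR.2.1 hf (hR.of_le hle)

end IsRegularOrder

theorem MemGamma.exists_pos_le_mul {g : ℝ → ℝ} (hg : MemGamma g) :
    ∃ M, 0 < M ∧ ∀ x, 0 ≤ x → g x ≤ M * x := by
  obtain ⟨hconv, -, hg0, L, hL⟩ := hg
  have hslope : ∀ x, 0 < x → g x / x ≤ L := by
    intro x hx
    refine ge_of_tendsto hL ?_
    filter_upwards [Filter.eventually_ge_atTop ⌈x⌉₊] with n hn
    have hxn : x ≤ n := (Nat.le_ceil x).trans (by exact_mod_cast hn)
    simpa [hg0] using hconv.secant_mono (a := 0) (Set.mem_Ici.2 le_rfl) (Set.mem_Ici.2 hx.le)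
      (Set.mem_Ici.2 (hx.le.trans hxn)) hx.ne' (by linarith) hxn
  refine ⟨max L 0 + 1, by positivity, fun x hx => ?_⟩
  rcases hx.eq_or_lt with rfl | hx
  · simp [hg0]
  · rw [← div_le_iff₀ hx]
    linarith [hslope x hx, le_max_left L 0]

section Options

variable {Ω : Type*}

theorem optPayoff_single (X : Ω → ℝ) (k c : ℝ) (ω : Ω) :
    optPayoff X (Finsupp.single k c) ω = c * max (X ω - k) 0 :=
  Finsupp.sum_single_index (zero_mul _)

theorem optPayoff_smul_add_smul (X : Ω → ℝ) (a b : ℝ) (θ₁ θ₂ : ℝ →₀ ℝ) (ω : Ω) :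
    optPayoff X (a • θ₁ + b • θ₂) ω = a * optPayoff X θ₁ ω + b * optPayoff X θ₂ ω := by
  have h := (Finsupp.linearCombination ℝ fun k => max (X ω - k) 0).map_add (a • θ₁) (b • θ₂)
  simp only [map_smul, Finsupp.linearCombination_apply, smul_eq_mul] at h
  exact h

theorem optCost_smul_add_smul (qX : ℝ → ℝ) (a b : ℝ) (θ₁ θ₂ : ℝ →₀ ℝ) :
    optCost qX (a • θ₁ + b • θ₂) = a * optCost qX θ₁ + b * optCost qX θ₂ := by
  have h := (Finsupp.linearCombination ℝ qX).map_add (a • θ₁) (b • θ₂)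
  simp only [map_smul, Finsupp.linearCombination_apply, smul_eq_mul] at h
  exact h

theorem optCost_nonneg {K : Set ℝ} {qX : ℝ → ℝ} (hqX : ∀ k ∈ K, 0 ≤ qX k) {θ : ℝ →₀ ℝ}
    (hθ : θ ∈ ThetaX K) : 0 ≤ optCost qX θ :=
  Finset.sum_nonneg fun k hk => mul_nonneg (hθ.2 k) (hqX k (hθ.1 (Finset.mem_coe.2 hk)))

theorem single_mem_ThetaX {K : Set ℝ} {k c : ℝ} (hk : k ∈ K) (hc : 0 ≤ c) :
    Finsupp.single k c ∈ ThetaX K := by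
  refine ⟨fun x hx => ?_, fun x => ?_⟩
  · rwa [Finsupp.support_single_subset (Finset.mem_coe.1 hx) |> Finset.mem_singleton.1]
  · rw [Finsupp.single_apply]
    split_ifs <;> simp [hc]

theorem smul_add_smul_mem_ThetaX {K : Set ℝ} {a b : ℝ} (ha : 0 ≤ a) (hb : 0 ≤ b)
    {θ₁ θ₂ : ℝ →₀ ℝ} (hθ₁ : θ₁ ∈ ThetaX K) (hθ₂ : θ₂ ∈ ThetaX K) :
    a • θ₁ + b • θ₂ ∈ ThetaX K := by
  classical
  refine ⟨fun k hk => ?_, fun k => ?_⟩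
  · rcases Finset.mem_union.1 (Finsupp.support_add (Finset.mem_coe.1 hk)) with h | h
    · exact hθ₁.1 (Finsupp.support_smul h)
    · exact hθ₂.1 (Finsupp.support_smul h)
  · simp only [Finsupp.add_apply, Finsupp.smul_apply, smul_eq_mul]
    exact add_nonneg (mul_nonneg ha (hθ₁.2 k)) (mul_nonneg hb (hθ₂.2 k))

end Options

section Hedging

open scoped Pointwise

variable {Ω : Type*} {R : (Ω → ℝ) → (Ω → ℝ) → Prop} {X : Ω → ℝ} {K : Set ℝ} {qX : ℝ → ℝ}

def hedgeCosts (R : (Ω → ℝ) → (Ω → ℝ) → Prop) (X : Ω → ℝ) (K : Set ℝ) (qX : ℝ → ℝ)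
    (h : Ω → ℝ) : Set ℝ :=
  {c | ∃ (l : ℝ) (θ : ℝ →₀ ℝ), 0 < l ∧ θ ∈ ThetaX K ∧
    R (fun ω => l * optPayoff X θ ω / min (X ω) 1) h ∧ c = l * optCost qX θ}

theorem nonneg_of_mem_hedgeCosts (hqX : ∀ k ∈ K, 0 ≤ qX k) {h : Ω → ℝ} {c : ℝ}
    (hc : c ∈ hedgeCosts R X K qX h) : 0 ≤ c := by
  obtain ⟨l, θ, hl, hθ, -, rfl⟩ := hc
  exact mul_nonneg hl.le (optCost_nonneg hqX hθ)

theorem bddBelow_hedgeCosts (hqX : ∀ k ∈ K, 0 ≤ qX k) (h : Ω → ℝ) :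
    BddBelow (hedgeCosts R X K qX h) :=
  ⟨0, fun _ => nonneg_of_mem_hedgeCosts hqX⟩

theorem piX_eq_sInf_hedgeCosts (hqX : ∀ k ∈ K, 0 ≤ qX k) {h : Ω → ℝ}
    (hne : (hedgeCosts R X K qX h).Nonempty) :
    piX R X K qX h = (sInf (hedgeCosts R X K qX h) : ℝ) := by
  rw [Monotone.map_csInf_of_continuousAt continuous_coe_real_ereal.continuousAt
    EReal.coe_strictMono.monotone hne (bddBelow_hedgeCosts hqX h), piX]
  congr 1
  ext y
  simp only [hedgeCosts, Set.mem_image, Set.mem_ofPred_eq]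
  constructor
  · rintro ⟨l, θ, hl, hθ, hR, rfl⟩
    exact ⟨_, ⟨l, θ, hl, hθ, hR, rfl⟩, rfl⟩
  · rintro ⟨_, ⟨l, θ, hl, hθ, hR, rfl⟩, rfl⟩
    exact ⟨l, θ, hl, hθ, hR, rfl⟩

/-- The call with strike `0`, bought in quantity `M`, superhedges `M X / (X ∧ 1)`. -/
theorem hedgeCosts_nonempty (hR : IsRegularOrder R) (hXpos : ∀ ω, 0 < X ω) (hK0 : (0 : ℝ) ∈ K)
    {h : Ω → ℝ} {M : ℝ} (hM : 0 < M) (hh : ∀ ω, h ω ≤ M * X ω / min (X ω) 1) :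
    (hedgeCosts R X K qX h).Nonempty := by
  refine ⟨_, M, Finsupp.single 0 1, hM, single_mem_ThetaX hK0 zero_le_one,
    hR.of_le fun ω => ?_, rfl⟩
  simpa [optPayoff_single, (hXpos ω).le] using hh ω

theorem hedgeCosts_subset_of_le (hR : IsRegularOrder R) {h h' : Ω → ℝ} (hle : h' ≤ h) :
    hedgeCosts R X K qX h ⊆ hedgeCosts R X K qX h' := by
  rintro _ ⟨l, θ, hl, hθ, hRθ, rfl⟩
  exact ⟨l, θ, hl, hθ, hR.trans_le hRθ hle, rfl⟩

theorem smul_add_smul_subset_hedgeCosts (hR : IsRegularOrder R) {a b : ℝ} (ha : 0 ≤ a)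
    (hb : 0 ≤ b) (h₁ h₂ : Ω → ℝ) :
    a • hedgeCosts R X K qX h₁ + b • hedgeCosts R X K qX h₂ ⊆
      hedgeCosts R X K qX (a • h₁ + b • h₂) := by
  rintro _ ⟨_, ⟨_, ⟨l₁, θ₁, hl₁, hθ₁, hR₁, rfl⟩, rfl⟩, _, ⟨_, ⟨l₂, θ₂, hl₂, hθ₂, hR₂, rfl⟩, rfl⟩,
    rfl⟩
  refine ⟨1, (a * l₁) • θ₁ + (b * l₂) • θ₂, one_pos,
    smul_add_smul_mem_ThetaX (by positivity) (by positivity) hθ₁ hθ₂, ?_, ?_⟩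
  · convert hR.2.2.2.1 _ _ _ _ a b hR₁ hR₂ ha hb using 1
    funext ω
    simp only [optPayoff_smul_add_smul, Pi.add_apply, Pi.smul_apply, smul_eq_mul]
    ring
  · simp only [optCost_smul_add_smul, smul_eq_mul]
    ring

theorem sInf_hedgeCosts_le_smul_add_smul (hR : IsRegularOrder R) (hqX : ∀ k ∈ K, 0 ≤ qX k)
    {a b : ℝ} (ha : 0 ≤ a) (hb : 0 ≤ b) {h h₁ h₂ : Ω → ℝ} (hle : h ≤ a • h₁ + b • h₂)
    (hne₁ : (hedgeCosts R X K qX h₁).Nonempty) (hne₂ : (hedgeCosts R X K qX h₂).Nonempty) :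
    sInf (hedgeCosts R X K qX h) ≤
      a * sInf (hedgeCosts R X K qX h₁) + b * sInf (hedgeCosts R X K qX h₂) := by
  have hsub : a • hedgeCosts R X K qX h₁ + b • hedgeCosts R X K qX h₂ ⊆
      hedgeCosts R X K qX h :=
    (smul_add_smul_subset_hedgeCosts hR ha hb h₁ h₂).trans (hedgeCosts_subset_of_le hR hle)
  calc sInf (hedgeCosts R X K qX h)
      ≤ sInf (a • hedgeCosts R X K qX h₁ + b • hedgeCosts R X K qX h₂) :=
        csInf_le_csInf (bddBelow_hedgeCosts hqX h) ((hne₁.smul_set).add hne₂.smul_set) hsub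
    _ = a * sInf (hedgeCosts R X K qX h₁) + b * sInf (hedgeCosts R X K qX h₂) := by
        rw [csInf_add hne₁.smul_set ((bddBelow_hedgeCosts hqX h₁).smul_of_nonneg ha)
          hne₂.smul_set ((bddBelow_hedgeCosts hqX h₂).smul_of_nonneg hb),
          Real.sInf_smul_of_nonneg ha, Real.sInf_smul_of_nonneg hb, smul_eq_mul, smul_eq_mul]

end Hedging

theorem stmt_16_general {Ω : Type*}
    (R : (Ω → ℝ) → (Ω → ℝ) → Prop) (hR : IsRegularOrder R)
    (X : Ω → ℝ) (hXpos : ∀ ω, 0 < X ω)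
    (K : Set ℝ) (hK0 : (0 : ℝ) ∈ K)
    (qX : ℝ → ℝ) (hqX : ∀ k ∈ K, 0 ≤ qX k)
    (g : ℝ → ℝ → ℝ)
    (hg : ∀ t : ℝ, 0 ≤ t → MemGamma (g t))
    (hgG : ∀ (a t₁ t₂ t : ℝ), 0 ≤ a → a ≤ 1 → 0 ≤ t₁ → 0 ≤ t₂ →
      a * t₁ + (1 - a) * t₂ ≤ t → ∀ x : ℝ, 0 ≤ x → g t x ≤ a * g t₁ x + (1 - a) * g t₂ x) :
    ∃ F : ℝ → ℝ,
      (∀ t : ℝ, 0 ≤ t →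
        piX R X K qX (fun ω => g t (X ω) / min (X ω) 1) = ((F t : ℝ) : EReal)) ∧
      (∀ t : ℝ, 0 ≤ t → 0 ≤ F t) ∧
      (∀ s t : ℝ, 0 ≤ s → s ≤ t → F t ≤ F s) ∧
      ConvexOn ℝ (Set.Ici 0) F := by
  set H : ℝ → Ω → ℝ := fun t ω => g t (X ω) / min (X ω) 1
  set C : ℝ → Set ℝ := fun t => hedgeCosts R X K qX (H t)
  have hne : ∀ t, 0 ≤ t → (C t).Nonempty := fun t ht => by
    obtain ⟨M, hM, hgM⟩ := (hg t ht).exists_pos_le_mul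
    exact hedgeCosts_nonempty hR hXpos hK0 hM fun ω =>
      div_le_div_of_nonneg_right (hgM _ (hXpos ω).le) (lt_min (hXpos ω) one_pos).le
  have hcombine : ∀ a t₁ t₂ t : ℝ, 0 ≤ a → a ≤ 1 → 0 ≤ t₁ → 0 ≤ t₂ → a * t₁ + (1 - a) * t₂ ≤ t →
      sInf (C t) ≤ a * sInf (C t₁) + (1 - a) * sInf (C t₂) := by
    intro a t₁ t₂ t ha ha1 ht₁ ht₂ ht
    refine sInf_hedgeCosts_le_smul_add_smul hR hqX ha (sub_nonneg.2 ha1) (fun ω => ?_)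
      (hne t₁ ht₁) (hne t₂ ht₂)
    simp only [H, Pi.add_apply, Pi.smul_apply, smul_eq_mul, ← mul_div_assoc, ← add_div]
    exact div_le_div_of_nonneg_right (hgG a t₁ t₂ t ha ha1 ht₁ ht₂ ht _ (hXpos ω).le)
      (lt_min (hXpos ω) one_pos).le
  refine ⟨fun t => sInf (C t), fun t ht => piX_eq_sInf_hedgeCosts hqX (hne t ht),
    fun t _ => Real.sInf_nonneg fun _ => nonneg_of_mem_hedgeCosts hqX,
    fun s t hs hst => by simpa using hcombine 1 s s t zero_le_one le_rfl hs hs (by simpa using hst),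
    convex_Ici 0, fun t₁ ht₁ t₂ ht₂ a b ha hb hab => ?_⟩
  obtain rfl : b = 1 - a := by linarith
  exact hcombine a t₁ t₂ _ ha (by linarith) ht₁ ht₂ le_rfl

/-- For a convex family `G = {g_t}` the call-price function
`F(t) = π_X(g_t(X)/(X∧1))` is real valued, nonnegative, nonincreasing and convex
on `[0,∞)`. -/
theorem stmt_16 {Ω : Type*} [Nonempty Ω]
    (R : (Ω → ℝ) → (Ω → ℝ) → Prop) (hR : IsRegularOrder R)
    (X : Ω → ℝ) (hXpos : ∀ ω, 0 < X ω)
    (Xstar : ℝ) (hXstar : starHigh R X = (Xstar : EReal))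
    (htail : ∀ x : ℝ, 0 ≤ x →
      starHigh R (fun ω => ({ω' | X ω' ≤ x}).indicator X ω) = ((min x Xstar : ℝ) : EReal))
    (K : Set ℝ) (hK0 : (0 : ℝ) ∈ K)
    (qX : ℝ → ℝ) (hqX : ∀ k ∈ K, 0 ≤ qX k)
    (g : ℝ → ℝ → ℝ)
    (hg : ∀ t : ℝ, 0 ≤ t → MemGamma (g t))
    (hgG : ∀ (a t₁ t₂ t : ℝ), 0 ≤ a → a ≤ 1 → 0 ≤ t₁ → 0 ≤ t₂ →
      a * t₁ + (1 - a) * t₂ ≤ t → ∀ x : ℝ, 0 ≤ x → g t x ≤ a * g t₁ x + (1 - a) * g t₂ x) :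
    ∃ F : ℝ → ℝ,
      (∀ t : ℝ, 0 ≤ t →
        piX R X K qX (fun ω => g t (X ω) / min (X ω) 1) = ((F t : ℝ) : EReal)) ∧
      (∀ t : ℝ, 0 ≤ t → 0 ≤ F t) ∧
      (∀ s t : ℝ, 0 ≤ s → s ≤ t → F t ≤ F s) ∧
      ConvexOn ℝ (Set.Ici 0) F :=
  stmt_16_general R hR X hXpos K hK0 qX hqX g hg hgG
end

section
/- Let 𝒩 be an ideal of subsets of Ω (∅ ∈ 𝒩; B ⊆ A ∈ 𝒩 implies B ∈ 𝒩; A, B ∈ 𝒩 implies A ∪ B ∈ 𝒩) with Ω ∉ 𝒩, and let A ⊆ Ω with A ∉ 𝒩. Then there exists a finitely additive probability μ on all subsets of Ω, i.e. a function μ : 𝒫(Ω) → [0, 1] with μ(∅) = 0, μ(Ω) = 1 and μ(B ∪ C) = μ(B) + μ(C) for all disjoint B, C ⊆ Ω, such that μ(N) = 0 for every N ∈ 𝒩 and μ(A) = 1. -/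
/-!
An ultrafilter `U` defines the two-valued finitely additive probability `S ↦ [S ∈ U]`.
It suffices to find an ultrafilter containing `A` and the complement of every null set,
i.e. one finer than `comk 𝒩 ⊓ 𝓟 A`; this filter is proper exactly because `A ∉ 𝒩`.
-/

open Filter

namespace Ultrafilter

variable {α : Type*} (U : Ultrafilter α)

noncomputable def prob (S : Set α) : ℝ := by
  classical exact if S ∈ U then 1 else 0

theorem prob_of_mem {S : Set α} (h : S ∈ U) : U.prob S = 1 := by
  simp [prob, h]

theorem prob_of_notMem {S : Set α} (h : S ∉ U) : U.prob S = 0 := by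
  simp [prob, h]

theorem prob_empty : U.prob ∅ = 0 :=
  U.prob_of_notMem U.empty_notMem

theorem prob_univ : U.prob Set.univ = 1 :=
  U.prob_of_mem univ_mem

theorem prob_mem_Icc (S : Set α) : U.prob S ∈ Set.Icc 0 1 := by
  by_cases h : S ∈ U <;> simp [U.prob_of_mem, U.prob_of_notMem, h]

theorem prob_union {B C : Set α} (hBC : Disjoint B C) :
    U.prob (B ∪ C) = U.prob B + U.prob C := by
  have not_both : ¬ (B ∈ U ∧ C ∈ U) := fun ⟨hB, hC⟩ =>
    U.empty_notMem (hBC.inter_eq ▸ inter_mem hB hC)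
  by_cases hB : B ∈ U <;> by_cases hC : C ∈ U
  · exact absurd ⟨hB, hC⟩ not_both
  · simp [U.prob_of_mem, U.prob_of_notMem, union_mem_iff, hB, hC]
  · simp [U.prob_of_mem, U.prob_of_notMem, union_mem_iff, hB, hC]
  · simp [U.prob_of_notMem, union_mem_iff, hB, hC]

end Ultrafilter

theorem exists_ultrafilter_mem_avoiding_ideal {α : Type*} {p : Set α → Prop} (he : p ∅)
    (hmono : ∀ t, p t → ∀ s ⊆ t, p s) (hunion : ∀ s, p s → ∀ t, p t → p (s ∪ t))
    {A : Set α} (hA : ¬ p A) :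
    ∃ U : Ultrafilter α, A ∈ U ∧ ∀ B, p B → B ∉ U := by
  have : (comk p he hmono hunion ⊓ 𝓟 A).NeBot := by
    simpa [neBot_iff, inf_principal_eq_bot] using hA
  let U := Ultrafilter.of (comk p he hmono hunion ⊓ 𝓟 A)
  have hU : ↑U ≤ comk p he hmono hunion ⊓ 𝓟 A := Ultrafilter.of_le _
  refine ⟨U, le_principal_iff.mp (hU.trans inf_le_right), fun B hB hBU => ?_⟩
  have hBc : Bᶜ ∈ U := hU.trans inf_le_left (by simpa using hB)
  exact U.compl_mem_iff_notMem.mp hBc hBU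

theorem stmt_18_general {Ω : Type*} (N : Set (Set Ω))
    (hempty : ∅ ∈ N)
    (hdown : ∀ A ∈ N, ∀ B, B ⊆ A → B ∈ N)
    (hunion : ∀ A ∈ N, ∀ B ∈ N, A ∪ B ∈ N)
    (A : Set Ω) (hA : A ∉ N) :
    ∃ μ : Set Ω → ℝ,
      μ ∅ = 0 ∧ μ Set.univ = 1 ∧
      (∀ B, 0 ≤ μ B ∧ μ B ≤ 1) ∧
      (∀ B C : Set Ω, Disjoint B C → μ (B ∪ C) = μ B + μ C) ∧
      (∀ B ∈ N, μ B = 0) ∧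
      μ A = 1 := by
  obtain ⟨U, hAU, hNU⟩ := exists_ultrafilter_mem_avoiding_ideal hempty hdown hunion hA
  exact ⟨U.prob, U.prob_empty, U.prob_univ, U.prob_mem_Icc, fun _ _ => U.prob_union,
    fun B hB => U.prob_of_notMem (hNU B hB), U.prob_of_mem hAU⟩

/-- Given an ideal `𝒩` of subsets of `Ω` with `Ω ∉ 𝒩` and a set `A ∉ 𝒩`, there is a
finitely additive probability `μ` on all subsets of `Ω` vanishing on `𝒩` and with
`μ(A) = 1`. -/
theorem stmt_18 {Ω : Type*} [Nonempty Ω] (N : Set (Set Ω))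
    (hempty : ∅ ∈ N)
    (hdown : ∀ A ∈ N, ∀ B, B ⊆ A → B ∈ N)
    (hunion : ∀ A ∈ N, ∀ B ∈ N, A ∪ B ∈ N)
    (huniv : Set.univ ∉ N)
    (A : Set Ω) (hA : A ∉ N) :
    ∃ μ : Set Ω → ℝ,
      μ ∅ = 0 ∧ μ Set.univ = 1 ∧
      (∀ B, 0 ≤ μ B ∧ μ B ≤ 1) ∧
      (∀ B C : Set Ω, Disjoint B C → μ (B ∪ C) = μ B + μ C) ∧
      (∀ B ∈ N, μ B = 0) ∧
      μ A = 1 :=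
  stmt_18_general N hempty hdown hunion A hA
end
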